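/- In the setting where X ~ Bernoulli(p), Z_i^j i.i.d. Bernoulli(1/2) independent of X, Y_i^j = Z_i^j ∧ X for i ∈ [F], j ∈ [N], and the user demands K distinct files: for any code U = (U_1,…,U_K) satisfying I(U; X) = 0 and H(Y_{d_1},…,Y_{d_K} | W, U) = 0 with W independent of (X, {Y_i^j}), the entropy H(U) is at least KF bits. -/

import Mathlib

/-!
Condition on the event `X = true`. Privacy makes `U` independent of `X`, so this does not change
the law of `U`; the key `W` stays independent of the requested files `Y`, which on this event are
`K * F` independent fair bits, hence uniform with entropy `K * F`; and decodability makes `Y` a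
function of `(W, U)` almost surely. Then
`H(W) + H(Y) = H(W, Y) ≤ H(W, U) ≤ H(W) + H(U)`.
-/

open scoped BigOperators Classical

noncomputable section

/-- Probability of an event under a pmf `p` on a finite sample space. -/
def prE {Ω : Type*} [Fintype Ω] (p : Ω → ℝ) (E : Ω → Prop) : ℝ :=
  ∑ ω, if E ω then p ω else 0

/-- `p` is a probability mass function. -/
def IsPMF {Ω : Type*} [Fintype Ω] (p : Ω → ℝ) : Prop :=
  (∀ ω, 0 ≤ p ω) ∧ ∑ ω, p ω = 1

/-- P(X = a). -/
def pr {Ω α : Type*} [Fintype Ω] (p : Ω → ℝ) (X : Ω → α) (a : α) : ℝ :=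
  prE p (fun ω => X ω = a)

/-- Shannon entropy in bits. -/
def ent {Ω α : Type*} [Fintype Ω] [Fintype α] (p : Ω → ℝ) (X : Ω → α) : ℝ :=
  -∑ a, pr p X a * Real.logb 2 (pr p X a)

/-- Conditional entropy H(Y | X) = H(X,Y) - H(X). -/
def condEnt {Ω α β : Type*} [Fintype Ω] [Fintype α] [Fintype β]
    (p : Ω → ℝ) (Y : Ω → β) (X : Ω → α) : ℝ :=
  ent p (fun ω => (X ω, Y ω)) - ent p X

/-- Mutual information I(X; Y). -/
def mi {Ω α β : Type*} [Fintype Ω] [Fintype α] [Fintype β]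
    (p : Ω → ℝ) (X : Ω → α) (Y : Ω → β) : ℝ :=
  ent p X + ent p Y - ent p (fun ω => (X ω, Y ω))

/-- Conditional mutual information I(X; Y | Z). -/
def cmi {Ω α β γ : Type*} [Fintype Ω] [Fintype α] [Fintype β] [Fintype γ]
    (p : Ω → ℝ) (X : Ω → α) (Y : Ω → β) (Z : Ω → γ) : ℝ :=
  ent p (fun ω => (X ω, Z ω)) + ent p (fun ω => (Y ω, Z ω))
    - ent p (fun ω => (X ω, Y ω, Z ω)) - ent p Z

/-- Independence of two random variables. -/
def IndepRV {Ω α β : Type*} [Fintype Ω] (p : Ω → ℝ) (X : Ω → α) (Y : Ω → β) : Prop :=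
  ∀ a b, prE p (fun ω => X ω = a ∧ Y ω = b) = pr p X a * pr p Y b

/-- X is uniformly distributed on its (finite) alphabet. -/
def IsUniform {Ω α : Type*} [Fintype Ω] [Fintype α] (p : Ω → ℝ) (X : Ω → α) : Prop :=
  ∀ a, pr p X a = 1 / (Fintype.card α : ℝ)

/-- Entropy of Y conditioned on the event E (e.g. {X = x}). -/
def entCondOn {Ω β : Type*} [Fintype Ω] [Fintype β] (p : Ω → ℝ) (Y : Ω → β)
    (E : Ω → Prop) : ℝ :=
  -∑ b, (prE p (fun ω => Y ω = b ∧ E ω) / prE p E) *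
      Real.logb 2 (prE p (fun ω => Y ω = b ∧ E ω) / prE p E)

/-- PMF conditioned on the event E. -/
def pCond {Ω : Type*} [Fintype Ω] (p : Ω → ℝ) (E : Ω → Prop) (ω : Ω) : ℝ :=
  if E ω then p ω / prE p E else 0


open Real InformationTheory

section Events

variable {Ω α β : Type*} [Fintype Ω] {p : Ω → ℝ}

lemma prE_congr {E E' : Ω → Prop} (h : ∀ ω, E ω ↔ E' ω) : prE p E = prE p E' := by
  simp only [prE, h]

lemma prE_nonneg (hp : ∀ ω, 0 ≤ p ω) (E : Ω → Prop) : 0 ≤ prE p E :=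
  Finset.sum_nonneg fun ω _ => by split <;> simp [hp ω]

lemma pr_nonneg (hp : ∀ ω, 0 ≤ p ω) (A : Ω → α) (a : α) : 0 ≤ pr p A a :=
  prE_nonneg hp _

lemma prE_mono (hp : ∀ ω, 0 ≤ p ω) {E E' : Ω → Prop} (h : ∀ ω, E ω → E' ω) :
    prE p E ≤ prE p E' :=
  Finset.sum_le_sum fun ω _ => by
    by_cases hE : E ω
    · simp [hE, h ω hE]
    · simp only [hE, if_false]; split <;> simp [hp ω]

lemma le_prE_of_mem (hp : ∀ ω, 0 ≤ p ω) {E : Ω → Prop} {ω : Ω} (h : E ω) :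
    p ω ≤ prE p E := by
  simpa [h, prE] using Finset.single_le_sum (f := fun ω => if E ω then p ω else 0)
    (fun ω _ => by split <;> simp [hp ω]) (Finset.mem_univ ω)

lemma prE_and_comp_eq_sum [Fintype β] (E : Ω → Prop) (T : Ω → β) (φ : β → Prop)
    [DecidablePred φ] :
    prE p (fun ω => E ω ∧ φ (T ω)) = ∑ b with φ b, prE p (fun ω => E ω ∧ T ω = b) := by
  simp only [prE]
  rw [Finset.sum_comm]
  refine Finset.sum_congr rfl fun ω _ => ?_
  by_cases hE : E ω <;> by_cases hφ : φ (T ω) <;> simp [hE, hφ]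

lemma prE_comp_eq_sum [Fintype β] (T : Ω → β) (φ : β → Prop) [DecidablePred φ] :
    prE p (fun ω => φ (T ω)) = ∑ b with φ b, pr p T b := by
  simpa [pr] using prE_and_comp_eq_sum (p := p) (fun _ => True) T φ

lemma pr_comp_eq_sum [Fintype β] [DecidableEq α] (T : Ω → β) (f : β → α) (a : α) :
    pr p (fun ω => f (T ω)) a = ∑ b with f b = a, pr p T b :=
  prE_comp_eq_sum T (f · = a)

lemma sum_pr [Fintype α] (hp : IsPMF p) (A : Ω → α) : ∑ a, pr p A a = 1 := by
  simpa [hp.2, prE] using (prE_comp_eq_sum (p := p) A (fun _ => True)).symm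

lemma pr_congr_ae {A B : Ω → α} (h : ∀ ω, p ω ≠ 0 → A ω = B ω) : pr p A = pr p B := by
  funext a
  refine Finset.sum_congr rfl fun ω _ => ?_
  by_cases hω : p ω = 0
  · simp [hω]
  · simp only [h ω hω]

lemma pr_pair (A : Ω → α) (B : Ω → β) (a : α) (b : β) :
    pr p (fun ω => (A ω, B ω)) (a, b) = prE p (fun ω => A ω = a ∧ B ω = b) :=
  prE_congr fun _ => Prod.ext_iff

lemma sum_pr_pair_fst [Fintype β] (A : Ω → α) (B : Ω → β) (a : α) :
    ∑ b, pr p (fun ω => (A ω, B ω)) (a, b) = pr p A a := by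
  simpa [pr_pair, pr] using (prE_and_comp_eq_sum (p := p) (A · = a) B fun _ => True).symm

lemma sum_pr_pair_snd [Fintype α] (A : Ω → α) (B : Ω → β) (b : β) :
    ∑ a, pr p (fun ω => (A ω, B ω)) (a, b) = pr p B b := by
  simpa [pr_pair, pr, and_comm] using (prE_and_comp_eq_sum (p := p) (B · = b) A fun _ => True).symm

lemma pr_pair_le_fst (hp : ∀ ω, 0 ≤ p ω) (A : Ω → α) (B : Ω → β) (c : α × β) :
    pr p (fun ω => (A ω, B ω)) c ≤ pr p A c.1 :=
  (pr_pair A B c.1 c.2).trans_le (prE_mono hp fun _ h => h.1)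

lemma pr_pair_le_snd (hp : ∀ ω, 0 ≤ p ω) (A : Ω → α) (B : Ω → β) (c : α × β) :
    pr p (fun ω => (A ω, B ω)) c ≤ pr p B c.2 :=
  (pr_pair A B c.1 c.2).trans_le (prE_mono hp fun _ h => h.2)

lemma pr_pair_eq_zero_of_mul_eq_zero (hp : ∀ ω, 0 ≤ p ω) (A : Ω → α) (B : Ω → β)
    {c : α × β} (h : pr p A c.1 * pr p B c.2 = 0) : pr p (fun ω => (A ω, B ω)) c = 0 := by
  refine le_antisymm ?_ (pr_nonneg hp _ _)
  rcases mul_eq_zero.mp h with h | h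
  · exact h ▸ pr_pair_le_fst hp A B c
  · exact h ▸ pr_pair_le_snd hp A B c

lemma IsPMF.nonempty (hp : IsPMF p) : Nonempty Ω := by
  by_contra h
  have := hp.2
  simp_all [not_nonempty_iff]

end Events

section Gibbs

variable {ι : Type*} [Fintype ι] {r s : ι → ℝ}

lemma mul_log_sub_mul_log_add_sub_eq {x y : ℝ} (hxy : y = 0 → x = 0) :
    x * log x - x * log y + y - x = y * klFun (x / y) := by
  rcases eq_or_ne y 0 with rfl | hy
  · simp [hxy rfl]
  rcases eq_or_ne x 0 with rfl | hx
  · simp [klFun]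
  rw [klFun, log_div hx hy]
  field_simp

/-- Gibbs' inequality, in the form of an exact formula for its defect. -/
lemma sum_mul_logb_sub_sum_mul_logb_eq (hrs : ∀ i, s i = 0 → r i = 0)
    (hsum : ∑ i, s i = ∑ i, r i) :
    ∑ i, r i * logb 2 (r i) - ∑ i, r i * logb 2 (s i)
      = (∑ i, s i * klFun (r i / s i)) / log 2 := by
  simp only [← mul_log_sub_mul_log_add_sub_eq (hrs _), Finset.sum_add_distrib,
    Finset.sum_sub_distrib, hsum, logb, mul_div_assoc', ← Finset.sum_div]
  ring

lemma sum_mul_klFun_div_nonneg (hr : ∀ i, 0 ≤ r i) (hs : ∀ i, 0 ≤ s i) :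
    0 ≤ ∑ i, s i * klFun (r i / s i) :=
  Finset.sum_nonneg fun i _ => mul_nonneg (hs i) (klFun_nonneg (div_nonneg (hr i) (hs i)))

lemma sum_mul_logb_le_sum_mul_logb (hr : ∀ i, 0 ≤ r i) (hs : ∀ i, 0 ≤ s i)
    (hrs : ∀ i, s i = 0 → r i = 0) (hsum : ∑ i, s i = ∑ i, r i) :
    ∑ i, r i * logb 2 (s i) ≤ ∑ i, r i * logb 2 (r i) := by
  have := sum_mul_logb_sub_sum_mul_logb_eq hrs hsum
  have := div_nonneg (sum_mul_klFun_div_nonneg hr hs) (log_pos one_lt_two).le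
  linarith

lemma eq_of_sum_mul_logb_eq (hr : ∀ i, 0 ≤ r i) (hs : ∀ i, 0 ≤ s i)
    (hrs : ∀ i, s i = 0 → r i = 0) (hsum : ∑ i, s i = ∑ i, r i)
    (heq : ∑ i, r i * logb 2 (s i) = ∑ i, r i * logb 2 (r i)) : r = s := by
  have hdefect := sum_mul_logb_sub_sum_mul_logb_eq hrs hsum
  rw [heq, sub_self, eq_comm, div_eq_zero_iff, or_iff_left (log_pos one_lt_two).ne',
    Finset.sum_eq_zero_iff_of_nonneg fun i _ =>
      mul_nonneg (hs i) (klFun_nonneg (div_nonneg (hr i) (hs i)))] at hdefect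
  funext i
  rcases mul_eq_zero.mp (hdefect i (Finset.mem_univ i)) with h | h
  · rw [h, hrs i h]
  · rw [klFun_eq_zero_iff (div_nonneg (hr i) (hs i)), div_eq_one_iff_eq] at h
    · exact h
    · rintro h0; simp [h0, hrs i h0] at h

end Gibbs

section Entropy

variable {Ω α β : Type*} [Fintype Ω] [Fintype α] [Fintype β] {p : Ω → ℝ}

lemma ent_congr_ae {A B : Ω → α} (h : ∀ ω, p ω ≠ 0 → A ω = B ω) : ent p A = ent p B := by
  simp only [ent, pr_congr_ae h]

lemma ent_comp_le (hp : IsPMF p) (T : Ω → β) (f : β → α) :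
    ent p (fun ω => f (T ω)) ≤ ent p T := by
  have hfiber : ∑ a, pr p (fun ω => f (T ω)) a * logb 2 (pr p (fun ω => f (T ω)) a)
      = ∑ b, pr p T b * logb 2 (pr p (fun ω => f (T ω)) (f b)) := by
    rw [← Finset.sum_fiberwise Finset.univ f]
    refine Finset.sum_congr rfl fun a _ => ?_
    rw [congrArg (· * logb 2 _) (pr_comp_eq_sum T f a), Finset.sum_mul]
    exact Finset.sum_congr rfl fun b hb => by rw [(Finset.mem_filter.mp hb).2]
  have hterm : ∀ b, pr p T b * logb 2 (pr p T b)
      ≤ pr p T b * logb 2 (pr p (fun ω => f (T ω)) (f b)) := by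
    intro b
    rcases (pr_nonneg hp.1 T b).eq_or_lt with h0 | h0
    · simp [← h0]
    · exact mul_le_mul_of_nonneg_left
        (logb_le_logb_of_le one_lt_two h0 (prE_mono hp.1 fun ω h => by simp [h])) h0.le
  rw [ent, ent, neg_le_neg_iff, hfiber]
  exact Finset.sum_le_sum fun b _ => hterm b

lemma ent_le_of_eq_comp_ae (hp : IsPMF p) {A : Ω → α} (T : Ω → β) (f : β → α)
    (h : ∀ ω, p ω ≠ 0 → A ω = f (T ω)) : ent p A ≤ ent p T :=
  ent_congr_ae h ▸ ent_comp_le hp T f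

lemma ent_of_isUniform {A : Ω → α} (h : IsUniform p A) :
    ent p A = logb 2 (Fintype.card α) := by
  have hpr : ∀ a, pr p A a = 1 / (Fintype.card α : ℝ) := h
  rcases isEmpty_or_nonempty α with hα | hα
  · simp [ent]
  · simp only [ent, hpr, Finset.sum_const, Finset.card_univ, nsmul_eq_mul, one_div, logb_inv]
    field_simp

lemma sum_pr_pair_mul_fst (A : Ω → α) (B : Ω → β) (g : α → ℝ) :
    ∑ c, pr p (fun ω => (A ω, B ω)) c * g c.1 = ∑ a, pr p A a * g a := by
  simp only [Fintype.sum_prod_type, ← Finset.sum_mul, sum_pr_pair_fst]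

lemma sum_pr_pair_mul_snd (A : Ω → α) (B : Ω → β) (g : β → ℝ) :
    ∑ c, pr p (fun ω => (A ω, B ω)) c * g c.2 = ∑ b, pr p B b * g b := by
  simp only [Fintype.sum_prod_type_right, ← Finset.sum_mul, sum_pr_pair_snd]

lemma sum_pr_mul_pr (hp : IsPMF p) (A : Ω → α) (B : Ω → β) :
    ∑ c : α × β, pr p A c.1 * pr p B c.2 = ∑ c, pr p (fun ω => (A ω, B ω)) c := by
  rw [Fintype.sum_prod_type, ← Finset.sum_mul_sum, sum_pr hp, sum_pr hp, sum_pr hp, one_mul]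

lemma sum_pr_pair_mul_logb_mul (hp : IsPMF p) (A : Ω → α) (B : Ω → β) :
    ∑ c, pr p (fun ω => (A ω, B ω)) c * logb 2 (pr p A c.1 * pr p B c.2)
      = -(ent p A + ent p B) := by
  have hsplit : ∀ c : α × β,
      pr p (fun ω => (A ω, B ω)) c * logb 2 (pr p A c.1 * pr p B c.2)
        = pr p (fun ω => (A ω, B ω)) c * logb 2 (pr p A c.1)
          + pr p (fun ω => (A ω, B ω)) c * logb 2 (pr p B c.2) := by
    intro c
    by_cases h : pr p A c.1 * pr p B c.2 = 0
    · simp [pr_pair_eq_zero_of_mul_eq_zero hp.1 A B h]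
    · rw [logb_mul (left_ne_zero_of_mul h) (right_ne_zero_of_mul h), mul_add]
  simp only [hsplit, Finset.sum_add_distrib, sum_pr_pair_mul_fst A B fun a => logb 2 (pr p A a),
    sum_pr_pair_mul_snd A B fun b => logb 2 (pr p B b), ent]
  ring

lemma ent_pair_le_add (hp : IsPMF p) (A : Ω → α) (B : Ω → β) :
    ent p (fun ω => (A ω, B ω)) ≤ ent p A + ent p B := by
  have := sum_mul_logb_le_sum_mul_logb (fun _ => pr_nonneg hp.1 _ _)
    (fun _ => mul_nonneg (pr_nonneg hp.1 _ _) (pr_nonneg hp.1 _ _))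
    (fun _ => pr_pair_eq_zero_of_mul_eq_zero hp.1 A B) (sum_pr_mul_pr hp A B)
  rw [sum_pr_pair_mul_logb_mul hp] at this
  rw [ent]
  linarith

lemma indepRV_of_mi_eq_zero (hp : IsPMF p) (A : Ω → α) (B : Ω → β) (h : mi p A B = 0) :
    IndepRV p A B := by
  have hprod := eq_of_sum_mul_logb_eq (fun _ => pr_nonneg hp.1 _ _)
    (fun _ => mul_nonneg (pr_nonneg hp.1 _ _) (pr_nonneg hp.1 _ _))
    (fun _ => pr_pair_eq_zero_of_mul_eq_zero hp.1 A B) (sum_pr_mul_pr hp A B)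
    (by rw [sum_pr_pair_mul_logb_mul hp, (sub_eq_zero.mp h : _), ent, neg_neg])
  intro a b
  rw [← pr_pair]
  exact congrFun hprod (a, b)

lemma ent_pair_of_indepRV (hp : IsPMF p) {A : Ω → α} {B : Ω → β} (h : IndepRV p A B) :
    ent p (fun ω => (A ω, B ω)) = ent p A + ent p B := by
  have hprod : ∀ c : α × β, pr p (fun ω => (A ω, B ω)) c = pr p A c.1 * pr p B c.2 :=
    fun c => (pr_pair A B c.1 c.2).trans (h c.1 c.2)
  rw [← neg_neg (ent p A + ent p B), ← sum_pr_pair_mul_logb_mul hp]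
  simp only [ent, hprod]

/-- Shannon's one-time-pad bound, with key `W`, message `Y` and cipher `U`. -/
lemma ent_le_of_indepRV_of_eq_comp (hp : IsPMF p) {γ : Type*} [Fintype γ] {W : Ω → γ}
    {Y : Ω → β} (U : Ω → α) (hWY : IndepRV p W Y) (g : γ × α → β)
    (hg : ∀ ω, p ω ≠ 0 → Y ω = g (W ω, U ω)) : ent p Y ≤ ent p U := by
  have hdecode : ent p (fun ω => (W ω, Y ω)) ≤ ent p (fun ω => (W ω, U ω)) :=
    ent_le_of_eq_comp_ae hp _ (fun c => (c.1, g c)) fun ω hω => by rw [hg ω hω]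
  linarith [ent_pair_of_indepRV hp hWY, ent_pair_le_add hp W U]

end Entropy

section Determinism

variable {Ω α β : Type*} [Fintype Ω] [Fintype α] [Fintype β] {p : Ω → ℝ}

lemma condEnt_eq_sum (X : Ω → α) (Y : Ω → β) :
    condEnt p Y X = ∑ c, pr p (fun ω => (X ω, Y ω)) c
      * (logb 2 (pr p X c.1) - logb 2 (pr p (fun ω => (X ω, Y ω)) c)) := by
  simp only [mul_sub, Finset.sum_sub_distrib,
    sum_pr_pair_mul_fst X Y fun a => logb 2 (pr p X a), condEnt, ent]
  ring

lemma pr_pair_eq_of_condEnt_eq_zero (hp : ∀ ω, 0 ≤ p ω) {X : Ω → α} {Y : Ω → β}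
    (h : condEnt p Y X = 0) {c : α × β} (hc : pr p (fun ω => (X ω, Y ω)) c ≠ 0) :
    pr p (fun ω => (X ω, Y ω)) c = pr p X c.1 := by
  have hterm : ∀ c : α × β, 0 ≤ pr p (fun ω => (X ω, Y ω)) c
      * (logb 2 (pr p X c.1) - logb 2 (pr p (fun ω => (X ω, Y ω)) c)) := fun c =>
    (pr_nonneg hp _ c).eq_or_lt.elim (fun h0 => by simp [← h0]) fun h0 =>
      mul_nonneg h0.le
        (sub_nonneg.mpr (logb_le_logb_of_le one_lt_two h0 (pr_pair_le_fst hp X Y c)))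
  rw [condEnt_eq_sum, Finset.sum_eq_zero_iff_of_nonneg fun c _ => hterm c] at h
  have hpos := (pr_nonneg hp _ c).lt_of_ne' hc
  exact logb_injOn_pos one_lt_two hpos (hpos.trans_le (pr_pair_le_fst hp X Y c))
    (sub_eq_zero.mp ((mul_eq_zero.mp (h c (Finset.mem_univ c))).resolve_left hc)).symm

/-- Each value `b` of positive mass carries all of `P(X = a)`, so there is room for only one. -/
lemma eq_of_condEnt_eq_zero (hp : ∀ ω, 0 ≤ p ω) {X : Ω → α} {Y : Ω → β}
    (h : condEnt p Y X = 0) {ω ω' : Ω} (hω : p ω ≠ 0) (hω' : p ω' ≠ 0) (hX : X ω = X ω') :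
    Y ω = Y ω' := by
  by_contra hY
  have hmass : ∀ ω'', p ω'' ≠ 0 → X ω'' = X ω →
      pr p (fun ω => (X ω, Y ω)) (X ω, Y ω'') = pr p X (X ω) := fun ω'' h'' hX'' =>
    pr_pair_eq_of_condEnt_eq_zero hp h (((hp ω'').lt_of_ne' h'').trans_le
      (le_prE_of_mem hp (E := fun ω₁ => (X ω₁, Y ω₁) = (X ω, Y ω'')) (by rw [hX'']))).ne'
  have hle : pr p (fun ω => (X ω, Y ω)) (X ω, Y ω) + pr p (fun ω => (X ω, Y ω)) (X ω, Y ω')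
      ≤ ∑ b, pr p (fun ω => (X ω, Y ω)) (X ω, b) := by
    rw [← Finset.sum_pair (f := fun b => pr p (fun ω => (X ω, Y ω)) (X ω, b)) hY]
    exact Finset.sum_le_sum_of_subset_of_nonneg (Finset.subset_univ _)
      fun _ _ _ => pr_nonneg hp _ _
  rw [hmass ω hω rfl, hmass ω' hω' hX.symm, sum_pr_pair_fst] at hle
  have hpos : 0 < pr p X (X ω) :=
    ((hp ω).lt_of_ne' hω).trans_le (le_prE_of_mem hp (E := fun ω' => X ω' = X ω) rfl)
  linarith

lemma exists_eq_comp_of_condEnt_eq_zero (hp : IsPMF p) {X : Ω → α} {Y : Ω → β}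
    (h : condEnt p Y X = 0) : ∃ g : α → β, ∀ ω, p ω ≠ 0 → Y ω = g (X ω) := by
  have := hp.nonempty
  refine ⟨fun a => Y (Classical.epsilon fun ω => p ω ≠ 0 ∧ X ω = a), fun ω hω => ?_⟩
  have hspec := Classical.epsilon_spec (p := fun ω' => p ω' ≠ 0 ∧ X ω' = X ω) ⟨ω, hω, rfl⟩
  exact eq_of_condEnt_eq_zero hp.1 h hω hspec.1 hspec.2.symm

end Determinism

section Conditioning

variable {Ω α β γ : Type*} [Fintype Ω] {p : Ω → ℝ}

lemma prE_pCond (E F : Ω → Prop) :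
    prE (pCond p E) F = prE p (fun ω => F ω ∧ E ω) / prE p E := by
  simp only [prE, pCond, Finset.sum_div]
  refine Finset.sum_congr rfl fun ω _ => ?_
  by_cases hF : F ω <;> by_cases hE : E ω <;> simp [hF, hE]

lemma pCond_isPMF (hp : IsPMF p) (E : Ω → Prop) (hE : prE p E ≠ 0) : IsPMF (pCond p E) := by
  refine ⟨fun ω => ?_, ?_⟩
  · unfold pCond
    split
    · exact div_nonneg (hp.1 ω) (prE_nonneg hp.1 E)
    · exact le_rfl
  · have htotal := prE_pCond (p := p) E fun _ => True
    simp only [prE, if_true, true_and] at htotal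
    rw [htotal]
    exact div_self hE

lemma pCond_ne_zero {E : Ω → Prop} {ω : Ω} (h : pCond p E ω ≠ 0) : p ω ≠ 0 ∧ E ω := by
  unfold pCond at h
  split_ifs at h with hE
  · exact ⟨fun h0 => h (by simp [h0]), hE⟩
  · exact absurd rfl h

lemma prE_and_comp_of_indepRV [Fintype β] {A : Ω → α} {T : Ω → β} (h : IndepRV p A T)
    (a : α) (φ : β → Prop) :
    prE p (fun ω => A ω = a ∧ φ (T ω)) = pr p A a * prE p (fun ω => φ (T ω)) := by
  rw [prE_and_comp_eq_sum, prE_comp_eq_sum, Finset.mul_sum]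
  exact Finset.sum_congr rfl fun b _ => h a b

lemma pr_pCond_of_indepRV [Fintype β] {A : Ω → α} {T : Ω → β} (h : IndepRV p A T)
    (φ : β → Prop) (hφ : prE p (fun ω => φ (T ω)) ≠ 0) (a : α) :
    pr (pCond p fun ω => φ (T ω)) A a = pr p A a := by
  rw [pr, prE_pCond, prE_and_comp_of_indepRV h, mul_div_cancel_right₀ _ hφ]

lemma indepRV_pCond [Fintype β] {A : Ω → α} {T : Ω → β} (h : IndepRV p A T)
    (φ : β → Prop) (hφ : prE p (fun ω => φ (T ω)) ≠ 0) (ψ : β → γ) :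
    IndepRV (pCond p fun ω => φ (T ω)) A fun ω => ψ (T ω) := by
  intro a c
  calc prE (pCond p fun ω => φ (T ω)) (fun ω => A ω = a ∧ ψ (T ω) = c)
      = prE p (fun ω => (A ω = a ∧ ψ (T ω) = c) ∧ φ (T ω)) / prE p (fun ω => φ (T ω)) :=
        prE_pCond _ _
    _ = pr p A a * (prE p (fun ω => ψ (T ω) = c ∧ φ (T ω)) / prE p (fun ω => φ (T ω))) := by
        rw [mul_div_assoc', ← prE_and_comp_of_indepRV h a fun b => ψ b = c ∧ φ b]
        exact congrArg (· / _) (prE_congr fun _ => and_assoc)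
    _ = pr (pCond p fun ω => φ (T ω)) A a * pr (pCond p fun ω => φ (T ω)) (fun ω => ψ (T ω)) c := by
        rw [pr_pCond_of_indepRV h φ hφ]
        exact congrArg _ (prE_pCond _ _).symm

end Conditioning

section Counting

variable {ι κ V : Type*} [Fintype ι] [Fintype κ] [Fintype V] [DecidableEq κ]

lemma card_filter_comp_eq_of_injective {d : ι → κ} (hd : Function.Injective d) (y : ι → V) :
    (Finset.univ.filter fun f : κ → V => f ∘ d = y).card
      = Fintype.card V ^ (Fintype.card κ - Fintype.card ι) := by
  let e : {f : κ → V // f ∘ d = y} ≃ ({j : κ // j ∉ Set.range d} → V) :=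
    { toFun := fun f j => f.1 j.1
      invFun := fun g => ⟨fun j => if h : j ∈ Set.range d then y h.choose else g ⟨j, h⟩,
        funext fun i => by
          have h : d i ∈ Set.range d := ⟨i, rfl⟩
          simp only [Function.comp_apply, dif_pos h, hd h.choose_spec]⟩
      left_inv := fun f => Subtype.ext <| funext fun j => by
        by_cases h : j ∈ Set.range d
        · simp only [dif_pos h, ← f.2, Function.comp_apply, h.choose_spec]
        · simp only [dif_neg h]
      right_inv := fun g => funext fun j => by simp only [dif_neg j.2] }
  rw [← Fintype.card_subtype, Fintype.card_congr e, Fintype.card_fun, Fintype.card_subtype_compl,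
    Set.card_range_of_injective hd]

variable {Ω : Type*} [Fintype Ω] {p : Ω → ℝ}

/-- Every fibre of `f ↦ f ∘ d` has the same size. -/
lemma IsUniform.comp_of_injective [DecidableEq ι] [Nonempty V] {T : Ω → κ → V}
    (hT : IsUniform p T) {d : ι → κ} (hd : Function.Injective d) :
    IsUniform p fun ω => T ω ∘ d := by
  intro y
  obtain ⟨m, hm⟩ := Nat.exists_eq_add_of_le (Fintype.card_le_of_injective d hd)
  have hV : (Fintype.card V : ℝ) ≠ 0 := Nat.cast_ne_zero.mpr Fintype.card_ne_zero
  rw [pr_comp_eq_sum T (· ∘ d) y, Finset.sum_congr rfl fun f _ => hT f, Finset.sum_const,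
    card_filter_comp_eq_of_injective hd y]
  simp only [Fintype.card_fun, hm, Nat.add_sub_cancel_left, nsmul_eq_mul, pow_add]
  push_cast
  field_simp

end Counting

/-- Example instantiation of the converse: with files built from i.i.d. fair bits
ANDed with X, any perfectly private, decodable code U has H(U) ≥ K·F bits. -/
theorem stmt12 {Ω γW γU : Type*} [Fintype Ω] [Fintype γW] [Fintype γU]
    {N F K : ℕ}
    (p : Ω → ℝ) (hp : IsPMF p) (X : Ω → Bool) (Z : Fin N → Fin F → Ω → Bool)
    (d : Fin K → Fin N) (hd : Function.Injective d)
    (W : Ω → γW) (U : Ω → γU)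
    (hiid : ∀ (x : Bool) (f : Fin N → Fin F → Bool),
      prE p (fun ω => X ω = x ∧ ∀ j i, Z j i ω = f j i)
        = pr p X x * ∏ _j : Fin N, ∏ _i : Fin F, (1 / 2 : ℝ))
    (hX1 : 0 < pr p X true)
    (hW : IndepRV p W (fun ω => (X ω, fun (j : Fin N) (i : Fin F) => Z j i ω && X ω)))
    (hpriv : mi p U X = 0)
    (hdec : condEnt p
      (fun ω => fun (k : Fin K) (i : Fin F) => Z (d k) i ω && X ω)
      (fun ω => (W ω, U ω)) = 0) :
    (K * F : ℝ) ≤ ent p U := by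
  set q := pCond p fun ω => X ω = true
  have hq : IsPMF q := pCond_isPMF hp _ hX1.ne'
  have hUq : ent q U = ent p U := by
    have hpr : ∀ u, pr q U u = pr p U u :=
      pr_pCond_of_indepRV (indepRV_of_mi_eq_zero hp U X hpriv) (· = true) hX1.ne'
    simp only [ent, hpr]
  have hWY : IndepRV q W fun ω k i => Z (d k) i ω && X ω :=
    indepRV_pCond hW (fun c => c.1 = true) hX1.ne' fun c k i => c.2 (d k) i
  have hZ : IsUniform q fun ω j i => Z j i ω := by
    intro f
    rw [pr, prE_pCond, prE_congr fun ω => by simp only [funext_iff]; exact and_comm,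
      hiid true f]
    rw [show prE p (fun ω => X ω = true) = pr p X true from rfl, mul_div_cancel_left₀ _ hX1.ne']
    simp [Finset.prod_const]
  have hY : IsUniform q fun ω k i => Z (d k) i ω && X ω := by
    rw [IsUniform, pr_congr_ae (B := fun ω => (fun j i => Z j i ω) ∘ d) fun ω hω => by
      simp [(pCond_ne_zero hω).2, Function.comp_def]]
    exact hZ.comp_of_injective hd
  obtain ⟨g, hg⟩ := exists_eq_comp_of_condEnt_eq_zero hp hdec
  calc (K * F : ℝ) = ent q fun ω k i => Z (d k) i ω && X ω := by
        rw [ent_of_isUniform hY, Fintype.card_fun, Fintype.card_fun]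
        simp [← pow_mul, logb_pow, mul_comm]
    _ ≤ ent q U := ent_le_of_indepRV_of_eq_comp hq U hWY g fun ω hω => hg ω (pCond_ne_zero hω).1
    _ = ent p U := hUq
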